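/- Let T ∈ L(E) be Moore–Penrose invertible and W an orthogonally complemented reducing submodule for T. If 0 is not in the C*-numerical range ω(T) = {⟨Tx, x⟩ : x ∈ E, ‖x‖ = 1}, then W is a reducing submodule for the Moore–Penrose inverse T† of T. In particular T(W) = W. -/

import Mathlib

open scoped RightActions

/-- The Hilbert C*-module class as it stood in Mathlib (Dec 2024): a right `A`-module
(via `SMul Aᵐᵒᵖ E`) with an `A`-valued inner product, `A`-linear on the right. -/
class CStarModuleRight (A : outParam <| Type*) (E : Type*) [NonUnitalSemiring A] [StarRing A]
    [Module ℂ A] [AddCommGroup E] [Module ℂ E] [PartialOrder A] [SMul Aᵐᵒᵖ E] [Norm A] [Norm E]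
    extends Inner A E where
  inner_add_right {x} {y} {z} : inner x (y + z) = inner x y + inner x z
  inner_self_nonneg {x} : 0 ≤ inner x x
  inner_self {x} : inner x x = 0 ↔ x = 0
  inner_op_smul_right {a : A} {x y : E} : inner x (y <• a) = inner x y * a
  inner_smul_right_complex {z : ℂ} {x} {y} : inner x (z • y) = z • inner x y
  star_inner x y : star (inner x y) = inner y x
  norm_eq_sqrt_norm_inner_self x : ‖x‖ = √‖inner x x‖

section

variable {A : Type*} [CStarAlgebra A] [PartialOrder A] [StarOrderedRing A]
variable {E : Type*} [NormedAddCommGroup E] [NormedSpace ℂ E] [SMul Aᵐᵒᵖ E]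
  [CStarModuleRight A E] [CompleteSpace E]

local notation "⟪" x ", " y "⟫" => inner (𝕜 := A) x y

/-- `T` is a bounded adjointable `A`-linear operator with adjoint `T'`. -/
def IsAdjointableWith (T T' : E →L[ℂ] E) : Prop :=
  (∀ (a : A) (x : E), T (x <• a) = T x <• a) ∧
  ∀ x y : E, ⟪T x, y⟫ = ⟪x, T' y⟫

/-- The orthogonal complement of a subset of a Hilbert C*-module. -/
def ortho (W : Set E) : Set E := {y | ∀ x ∈ W, ⟪x, y⟫ = (0 : A)}

/-- `W` is orthogonally complemented in `E`. -/
def OrthoComplemented (W : Set E) : Prop :=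
  ∀ z : E, ∃ x ∈ W, ∃ y ∈ ortho (A := A) W, z = x + y

/-- `W` is a closed `A`-submodule of `E`. -/
def IsClosedSubmodule (W : Submodule ℂ E) : Prop :=
  IsClosed (W : Set E) ∧ ∀ (a : A), ∀ x ∈ W, x <• a ∈ W

/-- An orthogonal projection in `L(E)`: an `A`-linear, idempotent, self-adjoint operator. -/
def IsOrthoProjection (P : E →L[ℂ] E) : Prop :=
  (∀ (a : A) (x : E), P (x <• a) = P x <• a) ∧ P.comp P = P ∧
  ∀ x y : E, ⟪P x, y⟫ = ⟪x, P y⟫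

/-- A "compact" operator on a Hilbert C*-module: a member of the closure of the span
of the rank-one operators `z ↦ x ⟨y, z⟩`. -/
def IsCompactOp (K : E →L[ℂ] E) : Prop :=
  K ∈ closure (Submodule.span ℂ
    {S : E →L[ℂ] E | ∃ x y : E, ∀ z : E, S z = x <• ⟪y, z⟫} : Set (E →L[ℂ] E))

/-- `E` is a finitely generated Hilbert `A`-module. -/
def IsFinGen : Prop :=
  ∃ (n : ℕ) (g : Fin n → E), ∀ x : E,
    x ∈ Submodule.span ℂ {y : E | ∃ (i : Fin n) (a : A), y = g i <• a}

/-- `T` is invertible in `L(E)`, the bounded adjointable operators. -/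
def InvertibleInL (T : E →L[ℂ] E) : Prop :=
  ∃ S S' : E →L[ℂ] E, IsAdjointableWith (A := A) S S' ∧ S.comp T = 1 ∧ T.comp S = 1

end

/-! The condition `0 ∉ ω(T)` makes `T` injective, since `T y = 0` gives `⟪T y, y⟫ = 0`.
Then `T T† T = T` forces `T† T = 1`, and self-adjointness of `T T†` forces `T T† = 1`, so `T` is
bijective with inverse `T†`. A bijection of `E = W ⊕ W^⊥` mapping each summand into itself maps
each summand onto itself, and so does its inverse. -/

theorem AddEquiv.image_eq_of_isCompl {G : Type*} [AddCommGroup G] {P Q : AddSubgroup G}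
    (hPQ : IsCompl P Q) (e : G ≃+ G) (hP : Set.MapsTo e P P) (hQ : Set.MapsTo e Q Q) :
    e '' P = P := by
  refine subset_antisymm hP.image_subset fun x hx => ?_
  obtain ⟨p, hp, q, hq, hpq⟩ :=
    AddSubgroup.mem_sup.mp (hPQ.sup_eq_top ▸ AddSubgroup.mem_top (e.symm x))
  have hx' : e p + e q = x := by rw [← map_add, hpq, e.apply_symm_apply]
  have heq : e q = 0 :=
    AddSubgroup.disjoint_def.mp hPQ.disjoint
      (by simpa [← hx'] using P.sub_mem hx (hP hp)) (hQ hq)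
  have hq0 : q = 0 := e.injective (heq.trans e.map_zero.symm)
  exact ⟨p, hp, by rwa [hq0, map_zero, add_zero] at hx'⟩

theorem AddEquiv.mapsTo_symm_of_isCompl {G : Type*} [AddCommGroup G] {P Q : AddSubgroup G}
    (hPQ : IsCompl P Q) (e : G ≃+ G) (hP : Set.MapsTo e P P) (hQ : Set.MapsTo e Q Q) :
    Set.MapsTo e.symm P P := by
  intro x hx
  rw [← e.image_eq_of_isCompl hPQ hP hQ] at hx
  obtain ⟨p, hp, rfl⟩ := hx
  simpa using hp

namespace CStarModuleRight

section

variable {A : Type*} [NonUnitalRing A] [StarRing A] [Module ℂ A] [PartialOrder A] [Norm A]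
variable {E : Type*} [NormedAddCommGroup E] [NormedSpace ℂ E] [SMul Aᵐᵒᵖ E]
  [CStarModuleRight A E]

local notation "⟪" x ", " y "⟫" => inner (𝕜 := A) x y

def innerRight (x : E) : E →+ A :=
  AddMonoidHom.mk' (fun y => ⟪x, y⟫) fun _ _ => inner_add_right

theorem inner_zero_right (x : E) : ⟪x, (0 : E)⟫ = (0 : A) :=
  (innerRight x).map_zero

theorem inner_zero_left (y : E) : ⟪(0 : E), y⟫ = (0 : A) := by
  rw [← star_inner y (0 : E), inner_zero_right, star_zero]

theorem inner_neg_right (x y : E) : ⟪x, -y⟫ = -⟪x, y⟫ :=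
  (innerRight x).map_neg y

theorem inner_smul_left_complex [StarModule ℂ A] (z : ℂ) (x y : E) :
    ⟪z • x, y⟫ = star z • ⟪x, y⟫ := by
  rw [← star_inner y (z • x), inner_smul_right_complex, star_smul, star_inner]

theorem eq_zero_of_inner_apply_self_eq_zero [StarModule ℂ A] {T : E →ₗ[ℂ] E}
    (hT : ∀ x : E, ‖x‖ = 1 → ⟪T x, x⟫ ≠ (0 : A)) {y : E} (hy : ⟪T y, y⟫ = (0 : A)) :
    y = 0 := by
  by_contra hy0
  have hny : ‖y‖ ≠ 0 := norm_ne_zero_iff.mpr hy0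
  refine hT ((‖y‖ : ℂ)⁻¹ • y) ?_ ?_
  · rw [norm_smul, norm_inv, Complex.norm_real, norm_norm, inv_mul_cancel₀ hny]
  · rw [map_smul, inner_smul_left_complex, inner_smul_right_complex, hy, smul_zero,
      smul_zero]

theorem injective_of_inner_apply_self_ne_zero [StarModule ℂ A] {T : E →ₗ[ℂ] E}
    (hT : ∀ x : E, ‖x‖ = 1 → ⟪T x, x⟫ ≠ (0 : A)) : Function.Injective T :=
  (injective_iff_map_eq_zero T).mpr fun y hy =>
    eq_zero_of_inner_apply_self_eq_zero hT (by rw [hy, inner_zero_left])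

theorem leftInverse_of_inner_apply_self_ne_zero [StarModule ℂ A] {T : E →ₗ[ℂ] E}
    (S : E → E) (hT : ∀ x : E, ‖x‖ = 1 → ⟪T x, x⟫ ≠ (0 : A)) (hTST : ∀ x, T (S (T x)) = T x) :
    Function.LeftInverse S T :=
  fun x => injective_of_inner_apply_self_ne_zero hT (hTST x)

/-- `y = x - T S x` is killed by the self-adjoint `T S`, so
`⟪T y, y⟫ = ⟪T S T y, y⟫ = ⟪T y, T S y⟫ = 0`. -/
theorem rightInverse_of_inner_apply_self_ne_zero [StarModule ℂ A] {T S : E →ₗ[ℂ] E}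
    (hT : ∀ x : E, ‖x‖ = 1 → ⟪T x, x⟫ ≠ (0 : A)) (hTST : ∀ x, T (S (T x)) = T x)
    (hTS : ∀ x y : E, ⟪T (S x), y⟫ = ⟪x, T (S y)⟫) :
    Function.RightInverse S T := by
  intro x
  set y := x - T (S x)
  have hTSy : T (S y) = 0 := by simp only [y, map_sub, hTST, sub_self]
  have hy : ⟪T y, y⟫ = (0 : A) := by
    rw [← hTST y, hTS, hTSy, inner_zero_right]
  exact (sub_eq_zero.mp (eq_zero_of_inner_apply_self_eq_zero hT hy)).symm

end

section

variable {A : Type*} [CStarAlgebra A] [PartialOrder A]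
variable {E : Type*} [NormedAddCommGroup E] [NormedSpace ℂ E] [SMul Aᵐᵒᵖ E]
  [CStarModuleRight A E]

def orthoAddSubgroup (S : Set E) : AddSubgroup E where
  carrier := ortho (A := A) S
  zero_mem' x _ := inner_zero_right x
  add_mem' {y z} hy hz x hx := by rw [inner_add_right, hy x hx, hz x hx, add_zero]
  neg_mem' {y} hy x hx := by rw [inner_neg_right, hy x hx, neg_zero]

theorem isCompl_orthoAddSubgroup {W : AddSubgroup E}
    (hW : OrthoComplemented (A := A) (W : Set E)) : IsCompl W (orthoAddSubgroup (A := A) W) where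
  disjoint := AddSubgroup.disjoint_def.mpr fun {z} hz hz' => inner_self.mp (hz' z hz)
  codisjoint := codisjoint_iff.mpr <| eq_top_iff.mpr fun z _ => by
    obtain ⟨x, hx, y, hy, rfl⟩ := hW z
    exact AddSubgroup.add_mem_sup hx hy

end

end CStarModuleRight

section

variable {A : Type*} [CStarAlgebra A] [PartialOrder A] [StarOrderedRing A]
variable {E : Type*} [NormedAddCommGroup E] [NormedSpace ℂ E] [SMul Aᵐᵒᵖ E]
  [CStarModuleRight A E] [CompleteSpace E]

local notation "⟪" x ", " y "⟫" => inner (𝕜 := A) x y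

theorem stmt12_general (T Td : E →L[ℂ] E)
    (h1 : T.comp (Td.comp T) = T)
    (h3 : ∀ x y : E, ⟪T (Td x), y⟫ = ⟪x, T (Td y)⟫)
    (W : Submodule ℂ E)
    (hWc : OrthoComplemented (A := A) (W : Set E))
    (hinv : ∀ x ∈ W, T x ∈ W)
    (hinv' : ∀ y ∈ ortho (A := A) (W : Set E), T y ∈ ortho (A := A) (W : Set E))
    (hnum : ∀ x : E, ‖x‖ = 1 → ⟪T x, x⟫ ≠ (0 : A)) :
    (∀ x ∈ W, Td x ∈ W) ∧
    (∀ y ∈ ortho (A := A) (W : Set E), Td y ∈ ortho (A := A) (W : Set E)) ∧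
    (⇑T '' (W : Set E) = (W : Set E)) := by
  have hTTdT : ∀ x, T (Td (T x)) = T x := DFunLike.congr_fun h1
  let e : E ≃+ E := AddEquiv.mk'
    ⟨T, Td,
      CStarModuleRight.leftInverse_of_inner_apply_self_ne_zero (T := T.toLinearMap) Td hnum hTTdT,
      CStarModuleRight.rightInverse_of_inner_apply_self_ne_zero (T := T.toLinearMap) hnum hTTdT h3⟩
    (map_add T)
  have hcompl := CStarModuleRight.isCompl_orthoAddSubgroup (W := W.toAddSubgroup) hWc
  exact ⟨e.mapsTo_symm_of_isCompl hcompl hinv hinv',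
    e.mapsTo_symm_of_isCompl hcompl.symm hinv' hinv, e.image_eq_of_isCompl hcompl hinv hinv'⟩

/-- If `T` is Moore–Penrose invertible with Moore–Penrose inverse `T†`, `W` is an orthogonally
complemented reducing submodule for `T`, and `0` is not in the C*-numerical range of `T`, then
`W` is a reducing submodule for `T†`; in particular `T(W) = W`. -/
theorem stmt12 (T T' Td : E →L[ℂ] E) (hT : IsAdjointableWith (A := A) T T')
    (hTd : ∃ Td' : E →L[ℂ] E, IsAdjointableWith (A := A) Td Td')
    (h1 : T.comp (Td.comp T) = T) (h2 : Td.comp (T.comp Td) = Td)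
    (h3 : ∀ x y : E, ⟪T (Td x), y⟫ = ⟪x, T (Td y)⟫)
    (h4 : ∀ x y : E, ⟪Td (T x), y⟫ = ⟪x, Td (T y)⟫)
    (W : Submodule ℂ E) (hWcl : IsClosedSubmodule (A := A) W)
    (hWc : OrthoComplemented (A := A) (W : Set E))
    (hinv : ∀ x ∈ W, T x ∈ W)
    (hinv' : ∀ y ∈ ortho (A := A) (W : Set E), T y ∈ ortho (A := A) (W : Set E))
    (hnum : ∀ x : E, ‖x‖ = 1 → ⟪T x, x⟫ ≠ (0 : A)) :
    (∀ x ∈ W, Td x ∈ W) ∧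
    (∀ y ∈ ortho (A := A) (W : Set E), Td y ∈ ortho (A := A) (W : Set E)) ∧
    (⇑T '' (W : Set E) = (W : Set E)) :=
  stmt12_general T Td h1 h3 W hWc hinv hinv' hnum

end
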